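/- For m ≥ 2 and 1 ≤ k ≤ m, the number of Type I subsets of size k of the extended m-ary tree T^+_{m,1} equals C(m, k−1) if k ≤ m−1, and equals m + 1 if k = m. (A subset S ⊆ V \ {r'} is Type I if S is a power dominating set of T^+_{m,1}.) -/
import Mathlib


/-- The power domination propagation sequence: `pIter G S 0 = N[S]` and
`pIter G S (k+1)` adds every vertex that is the unique unobserved neighbor
of some observed vertex. -/
def pIter {V : Type*} (G : SimpleGraph V) (S : Set V) : ℕ → Set V
  | 0 => {v | v ∈ S ∨ ∃ s ∈ S, G.Adj s v}
  | k + 1 => pIter G S k ∪ {x | ∃ v ∈ pIter G S k, G.neighborSet v \ pIter G S k = {x}}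

/-- The stable limit `P^∞(S)` of the power domination process. -/
def pInf {V : Type*} (G : SimpleGraph V) (S : Set V) : Set V := ⋃ k, pIter G S k

/-- `S` is a power dominating set for `G` if `P^∞(S) = V`. -/
def PowerDominates {V : Type*} (G : SimpleGraph V) (S : Set V) : Prop :=
  pInf G S = Set.univ

/-- The star `T⁺_{m,1}`: center `r = none` adjacent to the stem
`r' = some none` and to the leaves `r_i = some (some i)` for `i : Fin m`. -/
def starG (m : ℕ) : SimpleGraph (Option (Option (Fin m))) :=
  SimpleGraph.fromRel (fun a _ => a = none)

lemma starG_adj {m : ℕ} (a b : Option (Option (Fin m))) :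
    (starG m).Adj a b ↔ a ≠ b ∧ (a = none ∨ b = none) := by
  simp only [starG, SimpleGraph.fromRel_adj]

lemma pIter_le_succ {V : Type*} (G : SimpleGraph V) (S : Set V) (t : ℕ) :
    pIter G S t ⊆ pIter G S (t + 1) := by
  intro x hx; exact Or.inl hx

lemma pIter_zero_le {V : Type*} (G : SimpleGraph V) (S : Set V) (t : ℕ) :
    pIter G S 0 ⊆ pIter G S t := by
  induction t with
  | zero => exact le_refl _
  | succ t ih => exact ih.trans (pIter_le_succ G S t)

lemma pd_of_none_mem {m : ℕ} {S : Set (Option (Option (Fin m)))} (h : none ∈ S) :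
    PowerDominates (starG m) S := by
  have h0 : pIter (starG m) S 0 = Set.univ := by
    ext v
    simp only [pIter, Set.mem_setOf_eq, Set.mem_univ, iff_true]
    rcases v with _ | v
    · exact Or.inl h
    · exact Or.inr ⟨none, h, by rw [starG_adj]; simp⟩
  apply Set.eq_univ_of_univ_subset
  rw [← h0]
  exact Set.subset_iUnion (pIter (starG m) S) 0

lemma pd_of_leaves {m : ℕ} (hm : 0 < m) {S : Set (Option (Option (Fin m)))}
    (hL : ∀ i, some (some i) ∈ S)
    (hn : (none : Option (Option (Fin m))) ∉ S)
    (hn' : (some none : Option (Option (Fin m))) ∉ S) :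
    PowerDominates (starG m) S := by
  have h0 : pIter (starG m) S 0 = S ∪ {none} := by
    ext v
    simp only [pIter, Set.mem_setOf_eq, Set.mem_union, Set.mem_singleton_iff]
    constructor
    · rintro (hv | ⟨s, hs, hadj⟩)
      · exact Or.inl hv
      · rw [starG_adj] at hadj
        rcases hadj.2 with h | h
        · exact absurd (h ▸ hs) hn
        · exact Or.inr h
    · rintro (hv | rfl)
      · exact Or.inl hv
      · exact Or.inr ⟨some (some ⟨0, hm⟩), hL _, by rw [starG_adj]; simp⟩
  have h1 : (some none : Option (Option (Fin m))) ∈ pIter (starG m) S 1 := by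
    refine Or.inr ⟨none, by rw [h0]; exact Or.inr rfl, ?_⟩
    ext b
    simp only [Set.mem_diff, SimpleGraph.mem_neighborSet, starG_adj, h0,
      Set.mem_union, Set.mem_singleton_iff]
    rcases b with _ | b | i
    · simp
    · simp [hn']
    · simp [hL i]
  apply Set.eq_univ_of_univ_subset
  have huniv : Set.univ ⊆ pIter (starG m) S 1 := by
    intro v _
    rcases v with _ | v | i
    · exact pIter_zero_le _ _ 1 (by rw [h0]; exact Or.inr rfl)
    · exact h1
    · exact pIter_zero_le _ _ 1 (by rw [h0]; exact Or.inl (hL i))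
  exact huniv.trans (Set.subset_iUnion (pIter (starG m) S) 1)

lemma not_pd {m : ℕ} {S : Set (Option (Option (Fin m)))}
    (hn : (none : Option (Option (Fin m))) ∉ S)
    (hn' : (some none : Option (Option (Fin m))) ∉ S)
    (j : Fin m) (hj : some (some j) ∉ S) (hne : S.Nonempty) :
    ¬ PowerDominates (starG m) S := by
  -- every element of S is a leaf
  have hleaf : ∀ s ∈ S, ∃ i : Fin m, s = some (some i) := by
    intro s hs
    rcases s with _ | s | i
    · exact absurd hs hn
    · exact absurd hs hn'
    · exact ⟨i, rfl⟩
  have hnone0 : (none : Option (Option (Fin m))) ∈ pIter (starG m) S 0 := by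
    obtain ⟨s, hs⟩ := hne
    obtain ⟨i, rfl⟩ := hleaf s hs
    exact Or.inr ⟨_, hs, by rw [starG_adj]; simp⟩
  have key : ∀ t, pIter (starG m) S t ⊆ S ∪ {none} := by
    intro t
    induction t with
    | zero =>
      rintro v (hv | ⟨s, hs, hadj⟩)
      · exact Or.inl hv
      · obtain ⟨i, rfl⟩ := hleaf s hs
        rw [starG_adj] at hadj
        rcases hadj.2 with h | h
        · exact absurd h (by simp)
        · exact Or.inr h
    | succ t ih =>
      rintro v (hv | ⟨w, hw, hset⟩)
      · exact ih hv
      exfalso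
      have hnone : (none : Option (Option (Fin m))) ∈ pIter (starG m) S t :=
        pIter_zero_le _ _ t hnone0
      rcases ih hw with hw' | hw'
      · -- w is a leaf
        obtain ⟨i, rfl⟩ := hleaf w hw'
        have hv' : v ∈ (starG m).neighborSet (some (some i)) \ pIter (starG m) S t := by
          rw [hset]; rfl
        have : v = none := by
          have := hv'.1
          rw [SimpleGraph.mem_neighborSet, starG_adj] at this
          rcases this.2 with h | h
          · exact absurd h (by simp)
          · exact h
        exact hv'.2 (this ▸ hnone)
      · -- w = none
        have hw0 : w = none := hw'
        subst hw0
        have hmem : ∀ b : Option (Option (Fin m)), b ≠ none → b ∉ pIter (starG m) S t →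
            b ∈ (starG m).neighborSet none \ pIter (starG m) S t := by
          intro b hb1 hb2
          refine ⟨?_, hb2⟩
          rw [SimpleGraph.mem_neighborSet, starG_adj]
          exact ⟨fun h => hb1 h.symm, Or.inl rfl⟩
        have h1 : (some none : Option (Option (Fin m))) ∈
            (starG m).neighborSet none \ pIter (starG m) S t := by
          refine hmem _ (by simp) (fun h => ?_)
          rcases ih h with h' | h'
          · exact hn' h'
          · simp at h'
        have h2 : (some (some j) : Option (Option (Fin m))) ∈
            (starG m).neighborSet none \ pIter (starG m) S t := by
          refine hmem _ (by simp) (fun h => ?_)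
          rcases ih h with h' | h'
          · exact hj h'
          · simp at h'
        rw [hset] at h1 h2
        simp only [Set.mem_singleton_iff] at h1 h2
        rw [← h2] at h1
        simp at h1
  intro hpd
  have : (some none : Option (Option (Fin m))) ∈ pInf (starG m) S := by
    rw [hpd]; trivial
  obtain ⟨t, ht⟩ := Set.mem_iUnion.1 this
  rcases key t ht with h | h
  · exact hn' h
  · simp at h
open Finset

/-- For m ≥ 2 and 1 ≤ k ≤ m, the number of Type I subsets of size k of
T⁺_{m,1} (S ⊆ V \ {r'} power dominating) equals C(m, k−1) if k ≤ m−1, and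
m + 1 if k = m. -/
theorem stmt8 (m : ℕ) (hm : 2 ≤ m) (k : ℕ) (hk1 : 1 ≤ k) (hkm : k ≤ m) :
    Nat.card {S : Finset (Option (Option (Fin m))) //
        some none ∉ S ∧ S.card = k ∧
        PowerDominates (starG m) (↑S : Set (Option (Option (Fin m))))} =
      if k = m then m + 1 else Nat.choose m (k - 1) := by

  classical
  have hm0 : 0 < m := by omega
  set Lf : Finset (Option (Option (Fin m))) :=
    Finset.univ.image (fun i : Fin m => (some (some i) : Option (Option (Fin m)))) with hLf
  have hmemLf : ∀ x, x ∈ Lf ↔ ∃ i : Fin m, x = some (some i) := by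
    intro x; simp [hLf, eq_comm]
  have hLfcard : Lf.card = m := by
    rw [hLf, Finset.card_image_of_injective _ (fun a b h => by simpa using h)]
    simp
  -- characterization
  have hchar : ∀ S : Finset (Option (Option (Fin m))),
      (some none ∉ S ∧ S.card = k ∧ PowerDominates (starG m) (↑S : Set _)) ↔
      ((none ∈ S ∧ some none ∉ S ∧ S.card = k) ∨ (S = Lf ∧ k = m)) := by
    intro S
    constructor
    · rintro ⟨h1, h2, h3⟩
      by_cases hn : none ∈ S
      · exact Or.inl ⟨hn, h1, h2⟩
      · right
        have hall : ∀ i : Fin m, some (some i) ∈ S := by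
          intro i
          by_contra hj
          have hne : (↑S : Set (Option (Option (Fin m)))).Nonempty := by
            rw [Set.nonempty_coe_sort.symm]
            simp only [Set.nonempty_coe_sort, Finset.nonempty_coe_sort]
            exact Finset.card_pos.1 (by omega)
          exact not_pd (by simpa using hn) (by simpa using h1) i (by simpa using hj) hne h3
        have hS : S = Lf := by
          apply Finset.ext
          intro x
          rw [hmemLf]
          constructor
          · intro hx
            rcases x with _ | x | i
            · exact absurd hx hn
            · exact absurd hx h1
            · exact ⟨i, rfl⟩
          · rintro ⟨i, rfl⟩; exact hall i
        exact ⟨hS, by rw [← h2, hS, hLfcard]⟩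
    · rintro (⟨h1, h2, h3⟩ | ⟨rfl, hk⟩)
      · exact ⟨h2, h3, pd_of_none_mem (by simpa using h1)⟩
      · refine ⟨?_, by rw [hLfcard, hk], ?_⟩
        · rw [hmemLf]; rintro ⟨i, h⟩; simp at h
        · apply pd_of_leaves hm0
          · intro i; simpa using (hmemLf (some (some i))).2 ⟨i, rfl⟩
          · simp only [Finset.mem_coe, hmemLf]; rintro ⟨i, h⟩; simp at h
          · simp only [Finset.mem_coe, hmemLf]; rintro ⟨i, h⟩; simp at h
  rw [Nat.card_congr (Equiv.subtypeEquivRight hchar)]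
  rw [Nat.card_eq_fintype_card, Fintype.card_subtype]
  rw [Finset.filter_or, Finset.card_union_of_disjoint]
  · -- compute each card
    have hA : (Finset.univ.filter fun S : Finset (Option (Option (Fin m))) =>
        none ∈ S ∧ some none ∉ S ∧ S.card = k).card = Nat.choose m (k - 1) := by
      have himg : (Finset.univ.filter fun S : Finset (Option (Option (Fin m))) =>
          none ∈ S ∧ some none ∉ S ∧ S.card = k) =
          (Finset.powersetCard (k - 1) Lf).image (insert none) := by
        ext S
        simp only [Finset.mem_filter, Finset.mem_univ, true_and, Finset.mem_image,
          Finset.mem_powersetCard]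
        constructor
        · rintro ⟨h1, h2, h3⟩
          refine ⟨S.erase none, ⟨?_, ?_⟩, Finset.insert_erase h1⟩
          · intro x hx
            have hx1 := Finset.ne_of_mem_erase hx
            have hx2 := Finset.mem_of_mem_erase hx
            rcases x with _ | x | i
            · exact absurd rfl hx1
            · exact absurd hx2 h2
            · exact (hmemLf _).2 ⟨i, rfl⟩
          · rw [Finset.card_erase_of_mem h1, h3]
        · rintro ⟨T, ⟨hT1, hT2⟩, rfl⟩
          have hnT : (none : Option (Option (Fin m))) ∉ T := by
            intro h
            have := hT1 h
            rw [hmemLf] at this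
            obtain ⟨i, hi⟩ := this
            simp at hi
          refine ⟨Finset.mem_insert_self _ _, ?_, ?_⟩
          · simp only [Finset.mem_insert]
            rintro (h | h)
            · simp at h
            · have := hT1 h
              rw [hmemLf] at this
              obtain ⟨i, hi⟩ := this
              simp at hi
          · rw [Finset.card_insert_of_notMem hnT, hT2]; omega
      rw [himg, Finset.card_image_of_injOn, Finset.card_powersetCard, hLfcard]
      intro T hT T' hT' h
      have hnT : ∀ U ∈ Finset.powersetCard (k - 1) Lf,
          (none : Option (Option (Fin m))) ∉ U := by
        intro U hU hnone
        rw [Finset.mem_powersetCard] at hU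
        have := hU.1 hnone
        rw [hmemLf] at this
        obtain ⟨i, hi⟩ := this
        simp at hi
      have := congrArg (fun s => Finset.erase s none) h
      simpa [Finset.erase_insert (hnT T hT), Finset.erase_insert (hnT T' hT')] using this
    have hB : (Finset.univ.filter fun S : Finset (Option (Option (Fin m))) =>
        S = Lf ∧ k = m).card = if k = m then 1 else 0 := by
      by_cases hk : k = m
      · simp [hk, Finset.filter_eq']
      · simp [hk]
    rw [hA, hB]
    by_cases hk : k = m
    · subst hk
      have hc : Nat.choose k (k - 1) = k := by
        rw [← Nat.choose_symm (by omega : k - 1 ≤ k)]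
        have : k - (k - 1) = 1 := by omega
        rw [this, Nat.choose_one_right]
      simp [hc]
    · simp [hk]
  · -- disjoint
    rw [Finset.disjoint_left]
    intro S hS1 hS2
    simp only [Finset.mem_filter] at hS1 hS2
    rcases hS2.2 with ⟨rfl, _⟩
    have := hS1.2.1
    rw [hmemLf] at this
    obtain ⟨i, hi⟩ := this
    simp at hi
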